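/- Let 0 < t < y. Then E₁(y − t, t) ≤ y; that is, the mean of a N(y−t,1) random variable conditioned on the two-sided tail region (−∞,−t] ∪ [t,∞) is at most y. -/
import Mathlib


open MeasureTheory

/-- Standard Gaussian density `φ(x) = (2π)^{-1/2} exp(-x²/2)`. -/
noncomputable def gpdf (x : ℝ) : ℝ := (Real.sqrt (2 * Real.pi))⁻¹ * Real.exp (-x ^ 2 / 2)

/-- Standard Gaussian CDF `Φ(x)`. -/
noncomputable def gcdf (x : ℝ) : ℝ := ∫ t in Set.Iic x, gpdf t

/-- Normalizing constant `Z₁(μ,t) = 1 - Φ(t-μ) + Φ(-t-μ)`. -/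
noncomputable def Z1 (μ t : ℝ) : ℝ := 1 - gcdf (t - μ) + gcdf (-t - μ)

/-- Mean of `N(μ,1)` conditioned on the two-sided tail `(-∞,-t] ∪ [t,∞)`. -/
noncomputable def E1 (μ t : ℝ) : ℝ :=
  (Z1 μ t)⁻¹ * ∫ x in {x : ℝ | t ≤ |x|}, x * gpdf (x - μ)

namespace TruncGaussAux

open Set Real

lemma gpdf_pos (x : ℝ) : 0 < gpdf x := by
  unfold gpdf
  have h2π : (0:ℝ) < 2 * Real.pi := by positivity
  exact mul_pos (inv_pos.mpr (Real.sqrt_pos.mpr h2π)) (Real.exp_pos _)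

lemma gpdf_nonneg (x : ℝ) : 0 ≤ gpdf x := (gpdf_pos x).le

lemma gpdf_neg (x : ℝ) : gpdf (-x) = gpdf x := by unfold gpdf; rw [neg_pow]; norm_num

lemma gpdf_anti {a b : ℝ} (h : |a| ≤ |b|) : gpdf b ≤ gpdf a := by
  unfold gpdf
  have hc : (0:ℝ) ≤ (Real.sqrt (2 * Real.pi))⁻¹ := inv_nonneg.mpr (Real.sqrt_nonneg _)
  refine mul_le_mul_of_nonneg_left ?_ hc
  apply Real.exp_le_exp.mpr
  have h2 : a ^ 2 ≤ b ^ 2 := by nlinarith [abs_nonneg a, abs_nonneg b, sq_abs a, sq_abs b]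
  linarith

lemma integrable_gpdf : Integrable gpdf := by
  have h := (integrable_exp_neg_mul_sq (by norm_num : (0:ℝ) < 1/2)).const_mul
      (Real.sqrt (2 * Real.pi))⁻¹
  have he : gpdf = fun x => (Real.sqrt (2 * Real.pi))⁻¹ * Real.exp (-(1/2) * x ^ 2) := by
    funext x; unfold gpdf; congr 1; ring
  rw [he]; exact h

lemma integrable_id_mul_gpdf : Integrable (fun x => x * gpdf x) := by
  have h := (integrable_mul_exp_neg_mul_sq (by norm_num : (0:ℝ) < 1/2)).const_mul
      (Real.sqrt (2 * Real.pi))⁻¹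
  have he : (fun x => x * gpdf x)
      = fun x => (Real.sqrt (2 * Real.pi))⁻¹ * (x * Real.exp (-(1/2) * x ^ 2)) := by
    funext x; unfold gpdf; rw [show -x ^ 2 / 2 = -(1/2) * x ^ 2 by ring]; ring
  rw [he]; exact h

lemma integrable_affine_gpdf (a b : ℝ) : Integrable (fun x => (a * x + b) * gpdf x) := by
  have h := (integrable_id_mul_gpdf.const_mul a).add (integrable_gpdf.const_mul b)
  have he : (fun x => (a * x + b) * gpdf x)
      = fun x => a * (x * gpdf x) + b * gpdf x := by funext x; ring
  rw [he]; exact h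

lemma emb_add (c : ℝ) : MeasurableEmbedding (fun x : ℝ => x + c) :=
  (Homeomorph.addRight c).isClosedEmbedding.measurableEmbedding

lemma emb_subl (c : ℝ) : MeasurableEmbedding (fun x : ℝ => c - x) := by
  have h : (fun x : ℝ => c - x) = (fun x : ℝ => x + c) ∘ (fun x : ℝ => -x) := by
    funext x; simp [neg_add_eq_sub]
  rw [h]
  exact (emb_add c).comp ((Homeomorph.neg ℝ).isClosedEmbedding.measurableEmbedding)

lemma map_subl (c : ℝ) : Measure.map (fun x : ℝ => c - x) volume = volume := by
  have h : (fun x : ℝ => c - x) = (fun x : ℝ => x + c) ∘ (fun x : ℝ => -x) := by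
    funext x; simp [neg_add_eq_sub]
  rw [h, ← Measure.map_map (emb_add c).measurable measurable_neg,
    Measure.map_neg_eq_self, map_add_right_eq_self]

lemma setIntegral_comp_add_right' (F : ℝ → ℝ) (c : ℝ) (s : Set ℝ) :
    ∫ x in (fun x : ℝ => x + c) ⁻¹' s, F (x + c) = ∫ x in s, F x := by
  have h := (emb_add c).setIntegral_map (μ := volume) F s
  rw [map_add_right_eq_self] at h
  exact h.symm

lemma setIntegral_comp_sub_right' (F : ℝ → ℝ) (c : ℝ) (s : Set ℝ) :
    ∫ x in (fun x : ℝ => x - c) ⁻¹' s, F (x - c) = ∫ x in s, F x := by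
  simp only [sub_eq_add_neg]
  exact setIntegral_comp_add_right' F (-c) s

lemma setIntegral_comp_sub_left' (F : ℝ → ℝ) (c : ℝ) (s : Set ℝ) :
    ∫ x in (fun x : ℝ => c - x) ⁻¹' s, F (c - x) = ∫ x in s, F x := by
  have h := (emb_subl c).setIntegral_map (μ := volume) F s
  rw [map_subl] at h
  exact h.symm

lemma integrable_comp_sub_right {F : ℝ → ℝ} (hF : Integrable F) (c : ℝ) :
    Integrable (fun x => F (x - c)) := by
  simp only [sub_eq_add_neg]
  have hF' := hF
  rw [← map_add_right_eq_self (volume : Measure ℝ) (-c)] at hF'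
  exact (emb_add (-c)).integrable_map_iff.mp hF'

lemma integrable_comp_sub_left {F : ℝ → ℝ} (hF : Integrable F) (c : ℝ) :
    Integrable (fun x => F (c - x)) := by
  have hF' := hF
  rw [← map_subl c] at hF'
  exact (emb_subl c).integrable_map_iff.mp hF'

lemma integral_gpdf : ∫ x, gpdf x = 1 := by
  have he : gpdf = fun x => (Real.sqrt (2 * Real.pi))⁻¹ * Real.exp (-(1/2) * x ^ 2) := by
    funext x; unfold gpdf; congr 1; ring
  rw [he, integral_const_mul, integral_gaussian,
    show Real.pi / (1/2) = 2 * Real.pi by ring]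
  exact inv_mul_cancel₀ (ne_of_gt (Real.sqrt_pos.mpr (by positivity)))

lemma pointwise_reflect (t : ℝ) (ht : 0 < t) (u : ℝ) :
    (u - t) * gpdf u + (t - u) * gpdf (2 * t - u) ≤ 0 := by
  have hexp : (u - t) * gpdf u + (t - u) * gpdf (2 * t - u)
      = (u - t) * (gpdf u - gpdf (2 * t - u)) := by ring
  rw [hexp]
  rcases le_total t u with h | h
  · have habs : |2 * t - u| ≤ |u| := by
      rw [abs_of_pos (by linarith : (0:ℝ) < u)]
      exact abs_le.mpr ⟨by linarith, by linarith⟩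
    have hg := gpdf_anti habs
    exact mul_nonpos_of_nonneg_of_nonpos (by linarith) (by linarith)
  · have habs : |u| ≤ |2 * t - u| := by
      rw [abs_of_pos (by linarith : (0:ℝ) < 2 * t - u)]
      exact abs_le.mpr ⟨by linarith, by linarith⟩
    have hg := gpdf_anti habs
    exact mul_nonpos_of_nonpos_of_nonneg (by linarith) (by linarith)

end TruncGaussAux

open TruncGaussAux Set

/-- For `0 < t < y`, the mean of `N(y-t,1)` conditioned on the two-sided tail
`(-∞,-t] ∪ [t,∞)` is at most `y`. -/
theorem truncGaussTail_mean_le (t y : ℝ) (ht : 0 < t) (hty : t < y) :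
    E1 (y - t) t ≤ y := by
  set μ : ℝ := y - t with hμ
  set a : ℝ := 2 * t - y with ha
  have hay : a < y := by rw [ha]; linarith
  -- integrability facts
  have ig1 : Integrable (fun x => gpdf (x - μ)) := integrable_comp_sub_right integrable_gpdf μ
  have ig2 : Integrable (fun x => x * gpdf (x - μ)) := by
    have h := integrable_comp_sub_right (integrable_affine_gpdf 1 μ) μ
    have he : (fun x : ℝ => x * gpdf (x - μ)) = fun x => (1 * (x - μ) + μ) * gpdf (x - μ) := by
      funext x; ring_nf
    rw [he]; exact h
  have ig3 : Integrable (fun x => (x - y) * gpdf (x - μ)) := by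
    have h : (fun x : ℝ => (x - y) * gpdf (x - μ))
        = fun x => x * gpdf (x - μ) - y * gpdf (x - μ) := by funext x; ring
    rw [h]; exact ig2.sub (ig1.const_mul y)
  have ig4 : Integrable (fun u : ℝ => (u - t) * gpdf u) := by
    have h : (fun u : ℝ => (u - t) * gpdf u) = fun u => (1 * u + (-t)) * gpdf u := by
      funext u; ring
    rw [h]; exact integrable_affine_gpdf 1 (-t)
  have ig5 : Integrable (fun u : ℝ => (-u - t) * gpdf u) := by
    have h : (fun u : ℝ => (-u - t) * gpdf u) = fun u => ((-1) * u + (-t)) * gpdf u := by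
      funext u; ring
    rw [h]; exact integrable_affine_gpdf (-1) (-t)
  have ig6 : Integrable (fun v : ℝ => (t - v) * gpdf (2 * t - v)) := by
    have h := integrable_comp_sub_left ig4 (2 * t)
    have he : (fun v : ℝ => (t - v) * gpdf (2 * t - v))
        = fun v => ((2 * t - v) - t) * gpdf (2 * t - v) := by funext v; ring_nf
    rw [he]; exact h
  -- the tail set splits
  have hS : {x : ℝ | t ≤ |x|} = Iic (-t) ∪ Ici t := by
    ext x
    simp only [mem_setOf_eq, mem_union, mem_Iic, mem_Ici, le_abs]
    constructor
    · rintro (h | h)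
      · right; exact h
      · left; linarith
    · rintro (h | h)
      · right; linarith
      · left; exact h
  have hdisj : Disjoint (Iic (-t)) (Ici t) := by
    rw [Set.disjoint_left]
    intro x hx hx'
    simp only [mem_Iic, mem_Ici] at hx hx'
    linarith
  have hsplit : ∀ g : ℝ → ℝ, Integrable g →
      ∫ x in {x : ℝ | t ≤ |x|}, g x
        = (∫ x in Iic (-t), g x) + ∫ x in Ici t, g x := by
    intro g hg
    rw [hS, setIntegral_union hdisj measurableSet_Ici hg.integrableOn hg.integrableOn]
  -- Z1 as a tail integral
  have hZ1 : gcdf (-t - μ) = ∫ x in Iic (-t), gpdf (x - μ) := by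
    have h := setIntegral_comp_sub_right' gpdf μ (Iic (-t - μ))
    have hpre : (fun x : ℝ => x - μ) ⁻¹' Iic (-t - μ) = Iic (-t) := by
      ext x; simp only [mem_preimage, mem_Iic]
      constructor <;> intro hh <;> linarith
    rw [hpre] at h
    rw [gcdf, ← h]
  have hZ2 : 1 - gcdf (t - μ) = ∫ x in Ici t, gpdf (x - μ) := by
    have htot := setIntegral_union (Iic_disjoint_Ioi (le_refl (t - μ))) measurableSet_Ioi
      (integrable_gpdf.integrableOn) (integrable_gpdf.integrableOn)
    rw [Iic_union_Ioi, setIntegral_univ, integral_gpdf] at htot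
    have hshift : ∫ x in Ioi (t - μ), gpdf x = ∫ x in Ici t, gpdf (x - μ) := by
      have h := setIntegral_comp_sub_right' gpdf μ (Ioi (t - μ))
      have hpre : (fun x : ℝ => x - μ) ⁻¹' Ioi (t - μ) = Ioi t := by
        ext x; simp only [mem_preimage, mem_Ioi]
        constructor <;> intro hh <;> linarith
      rw [hpre] at h
      rw [← h, integral_Ici_eq_integral_Ioi]
    rw [← hshift]
    have hg : gcdf (t - μ) = ∫ x in Iic (t - μ), gpdf x := rfl
    linarith
  have hZ : Z1 μ t = (∫ x in Iic (-t), gpdf (x - μ)) + ∫ x in Ici t, gpdf (x - μ) := by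
    rw [Z1]; linarith
  -- positivity of Z1
  have hpos2 : 0 < ∫ x in Ici t, gpdf (x - μ) := by
    rw [setIntegral_pos_iff_support_of_nonneg_ae
      (Filter.Eventually.of_forall fun x => gpdf_nonneg _) ig1.integrableOn]
    have hsupp : (Function.support fun x => gpdf (x - μ)) = univ := by
      ext x
      simp only [Function.mem_support, mem_univ, iff_true]
      exact (gpdf_pos _).ne'
    rw [hsupp, univ_inter, Real.volume_Ici]
    exact ENNReal.zero_lt_top
  have hZpos : 0 < Z1 μ t := by
    have hnn : 0 ≤ ∫ x in Iic (-t), gpdf (x - μ) :=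
      setIntegral_nonneg measurableSet_Iic (fun x _ => gpdf_nonneg _)
    rw [hZ]; linarith
  -- substitution on the right tail
  have e1 : ∫ x in Ici t, (x - y) * gpdf (x - μ) = ∫ u in Ioi a, (u - t) * gpdf u := by
    have h := setIntegral_comp_sub_right' (fun u => (u - t) * gpdf u) μ (Ioi a)
    have hpre : (fun x : ℝ => x - μ) ⁻¹' Ioi a = Ioi t := by
      ext x; simp only [mem_preimage, mem_Ioi]
      rw [hμ, ha]
      constructor <;> intro hh <;> linarith
    rw [hpre] at h
    rw [integral_Ici_eq_integral_Ioi, ← h]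
    apply setIntegral_congr_fun measurableSet_Ioi
    intro x _
    show (x - y) * gpdf (x - μ) = (x - μ - t) * gpdf (x - μ)
    rw [hμ]; ring_nf
  -- substitution on the left tail
  have e2 : ∫ x in Iic (-t), (x - y) * gpdf (x - μ) = ∫ u in Ioi y, (-u - t) * gpdf u := by
    have h0 := integral_comp_neg_Ioi t (fun x => (x - y) * gpdf (x - μ))
    have h := setIntegral_comp_add_right' (fun u => (-u - t) * gpdf u) μ (Ioi y)
    have hpre : (fun x : ℝ => x + μ) ⁻¹' Ioi y = Ioi t := by
      ext x; simp only [mem_preimage, mem_Ioi]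
      rw [hμ]
      constructor <;> intro hh <;> linarith
    rw [hpre] at h
    rw [← h0, ← h]
    apply setIntegral_congr_fun measurableSet_Ioi
    intro x _
    show (-x - y) * gpdf (-x - μ) = (-(x + μ) - t) * gpdf (x + μ)
    rw [show -x - μ = -(x + μ) by ring, gpdf_neg, hμ]
    ring_nf
  -- split the right tail at y
  have esplit : ∫ u in Ioi a, (u - t) * gpdf u
      = (∫ u in Ioo a y, (u - t) * gpdf u) + ∫ u in Ici y, (u - t) * gpdf u := by
    rw [← Ioo_union_Ici_eq_Ioi hay]
    apply setIntegral_union ?_ measurableSet_Ici ig4.integrableOn ig4.integrableOn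
    rw [Set.disjoint_left]
    intro x hx hx'
    simp only [mem_Ioo, mem_Ici] at hx hx'
    linarith [hx.2]
  -- the part beyond y is nonpositive
  have part2 : (∫ u in Ici y, (u - t) * gpdf u) + (∫ u in Ioi y, (-u - t) * gpdf u) ≤ 0 := by
    rw [← integral_Ici_eq_integral_Ioi, ← integral_add ig4.integrableOn ig5.integrableOn]
    apply setIntegral_nonpos measurableSet_Ici
    intro u _
    nlinarith [mul_nonneg ht.le (gpdf_nonneg u)]
  -- the reflected middle part is nonpositive
  have part1 : (∫ u in Ioo a y, (u - t) * gpdf u) ≤ 0 := by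
    have hrefl : ∫ u in Ioo a y, (u - t) * gpdf u
        = ∫ v in Ioo a y, (t - v) * gpdf (2 * t - v) := by
      have h := setIntegral_comp_sub_left' (fun u => (u - t) * gpdf u) (2 * t) (Ioo a y)
      have hpre : (fun x : ℝ => 2 * t - x) ⁻¹' Ioo a y = Ioo a y := by
        ext x; simp only [mem_preimage, mem_Ioo]
        rw [ha]
        constructor <;> rintro ⟨h1, h2⟩ <;> exact ⟨by linarith, by linarith⟩
      rw [hpre] at h
      rw [← h]
      apply setIntegral_congr_fun measurableSet_Ioo
      intro v _
      show (2 * t - v - t) * gpdf (2 * t - v) = (t - v) * gpdf (2 * t - v)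
      ring
    have hsum := integral_add (μ := volume.restrict (Ioo a y)) ig4.integrableOn ig6.integrableOn
    have hle : ∫ u in Ioo a y, ((u - t) * gpdf u + (t - u) * gpdf (2 * t - u)) ≤ 0 :=
      setIntegral_nonpos measurableSet_Ioo (fun u _ => pointwise_reflect t ht u)
    rw [hsum] at hle
    linarith [hrefl, hle]
  -- combine everything
  have main : (∫ x in Iic (-t), (x - y) * gpdf (x - μ))
      + (∫ x in Ici t, (x - y) * gpdf (x - μ)) ≤ 0 := by
    rw [e1, e2, esplit]; linarith
  have hdiff : ∀ s : Set ℝ, ∫ x in s, (x - y) * gpdf (x - μ)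
      = (∫ x in s, x * gpdf (x - μ)) - y * ∫ x in s, gpdf (x - μ) := by
    intro s
    have e0 : ∫ x in s, (x - y) * gpdf (x - μ)
        = ∫ x in s, (x * gpdf (x - μ) - y * gpdf (x - μ)) :=
      integral_congr_ae (Filter.Eventually.of_forall fun x => by ring)
    rw [e0, integral_sub ig2.integrableOn ((ig1.const_mul y).integrableOn), integral_const_mul]
  have key : (∫ x in {x : ℝ | t ≤ |x|}, x * gpdf (x - μ)) ≤ y * Z1 μ t := by
    rw [hsplit _ ig2, hZ]
    have h1 := hdiff (Iic (-t))
    have h2 := hdiff (Ici t)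
    linarith [main, h1, h2]
  show (Z1 μ t)⁻¹ * (∫ x in {x : ℝ | t ≤ |x|}, x * gpdf (x - μ)) ≤ y
  calc (Z1 μ t)⁻¹ * (∫ x in {x : ℝ | t ≤ |x|}, x * gpdf (x - μ))
      ≤ (Z1 μ t)⁻¹ * (y * Z1 μ t) := mul_le_mul_of_nonneg_left key (inv_nonneg.mpr hZpos.le)
    _ = y := by field_simp
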